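/- Let C and D be triangulated categories equipped with weight structures w and w' respectively, and let F : C → D be an exact (triangulated) functor that is weight-exact (F maps C_{w≤0} into D_{w'≤0} and C_{w≥0} into D_{w'≥0}) and fully faithful. Let m ≤ n be integers and let h be a morphism in C. If F(h) kills weights m,…,n with respect to w', then h kills weights m,…,n with respect to w. -/

import Mathlib

/-!
Choose weight decompositions `w_{≤n}M → M` and `N → w_{≥m}N` in `C`. Since `F` is weight-exact,
`F(w_{≤n}M)` has weights `≤ n` and `F(w_{≥m}N)` has weights `≥ m`; by orthogonality, the maps
`F(w_{≤n}M) → F M` and `F N → F(w_{≥m}N)` factor through the weight decompositions in `D`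
witnessing that `F h` kills weights `m,…,n`. Hence `F` of the composite
`w_{≤n}M → M → N → w_{≥m}N` vanishes, and so does the composite, `F` being faithful.
-/

open CategoryTheory CategoryTheory.Limits CategoryTheory.Pretriangulated ZeroObject

universe v u

variable (C : Type u) [Category.{v} C] [HasZeroObject C] [Preadditive C] [HasShift C ℤ]
  [∀ n : ℤ, (shiftFunctor C n).Additive] [Pretriangulated C]

/-- A weight structure on a triangulated category `C`: a pair of retract-closed classes
`le = C_{w≤0}` and `ge = C_{w≥0}` satisfying semi-invariance with respect to translations,
orthogonality, and the existence of weight decompositions. -/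
structure WeightStructure where
  /-- the class `C_{w≤0}` -/
  le : Set C
  /-- the class `C_{w≥0}` -/
  ge : Set C
  /-- `C_{w≤0}` is closed under retracts -/
  le_retract : ∀ ⦃X Y : C⦄ (i : X ⟶ Y) (r : Y ⟶ X), i ≫ r = 𝟙 X → le Y → le X
  /-- `C_{w≥0}` is closed under retracts -/
  ge_retract : ∀ ⦃X Y : C⦄ (i : X ⟶ Y) (r : Y ⟶ X), i ≫ r = 𝟙 X → ge Y → ge X
  /-- `C_{w≤0} ⊆ C_{w≤0}[1]`, i.e. `X ∈ C_{w≤0} → X[-1] ∈ C_{w≤0}` -/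
  le_shift : ∀ ⦃X : C⦄, le X → le ((shiftFunctor C (-1 : ℤ)).obj X)
  /-- `C_{w≥0}[1] ⊆ C_{w≥0}`, i.e. `X ∈ C_{w≥0} → X[1] ∈ C_{w≥0}` -/
  ge_shift : ∀ ⦃X : C⦄, ge X → ge ((shiftFunctor C (1 : ℤ)).obj X)
  /-- orthogonality: `Hom(X, Y[1]) = 0` for `X ∈ C_{w≤0}`, `Y ∈ C_{w≥0}` -/
  orth : ∀ ⦃X Y : C⦄, le X → ge Y → ∀ f : X ⟶ (shiftFunctor C (1 : ℤ)).obj Y, f = 0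
  /-- existence of weight decompositions -/
  decomp : ∀ M : C, ∃ (X Y : C) (f : X ⟶ M) (g : M ⟶ Y)
      (h : Y ⟶ (shiftFunctor C (1 : ℤ)).obj X),
      Triangle.mk f g h ∈ (distTriang C) ∧ le X ∧ ge ((shiftFunctor C (-1 : ℤ)).obj Y)

variable {C}

namespace WeightStructure

/-- `X ∈ C_{w≤i} = C_{w≤0}[i]`, i.e. `X[-i] ∈ C_{w≤0}`. -/
def leDeg (w : WeightStructure C) (i : ℤ) (X : C) : Prop :=
  w.le ((shiftFunctor C (-i)).obj X)

/-- `X ∈ C_{w≥i} = C_{w≥0}[i]`, i.e. `X[-i] ∈ C_{w≥0}`. -/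
def geDeg (w : WeightStructure C) (i : ℤ) (X : C) : Prop :=
  w.ge ((shiftFunctor C (-i)).obj X)

/-- The triangle `A → M → B → A[1]` is an `m`-weight decomposition of `M`:
it is distinguished, `A ∈ C_{w≤m}` and `B ∈ C_{w≥m+1}`. -/
def IsWeightDecomp (w : WeightStructure C) (m : ℤ) {A M B : C}
    (f : A ⟶ M) (g : M ⟶ B) (h : B ⟶ (shiftFunctor C (1 : ℤ)).obj A) : Prop :=
  Triangle.mk f g h ∈ (distTriang C) ∧ w.leDeg m A ∧ w.geDeg (m + 1) B

/-- `g : M ⟶ N` kills weights `m,…,n`: there exist an `n`-weight decomposition of `M` and an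
`(m-1)`-weight decomposition of `N` such that the composite `w_{≤n}M → M → N → w_{≥m}N` is `0`. -/
def KillsWeights (w : WeightStructure C) (m n : ℤ) {M N : C} (g : M ⟶ N) : Prop :=
  ∃ (A B A' B' : C) (f : A ⟶ M) (p : M ⟶ B) (δ : B ⟶ (shiftFunctor C (1 : ℤ)).obj A)
    (f' : A' ⟶ N) (p' : N ⟶ B') (δ' : B' ⟶ (shiftFunctor C (1 : ℤ)).obj A'),
    w.IsWeightDecomp n f p δ ∧ w.IsWeightDecomp (m - 1) f' p' δ' ∧ f ≫ g ≫ p' = 0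

/-- `M` is without weights `m,…,n` if `𝟙 M` kills weights `m,…,n`. -/
def WithoutWeights (w : WeightStructure C) (m n : ℤ) (M : C) : Prop :=
  w.KillsWeights m n (𝟙 M)

end WeightStructure

lemma CategoryTheory.Pretriangulated.distinguished_mk_comp_iso {T : Triangle C}
    (hT : T ∈ distTriang C) {M : C} (e : T.obj₂ ≅ M) :
    Triangle.mk (T.mor₁ ≫ e.hom) (e.inv ≫ T.mor₂) T.mor₃ ∈ distTriang C :=
  isomorphic_distinguished T hT _ (Triangle.isoMk _ _ (Iso.refl _) e.symm (Iso.refl _)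
    (by dsimp [Triangle.mk]; simp) (by dsimp [Triangle.mk]; simp) (by dsimp [Triangle.mk]; simp))

namespace WeightStructure

variable (w : WeightStructure C)

lemma le_of_iso {X Y : C} (e : X ≅ Y) (hX : w.le X) : w.le Y :=
  w.le_retract e.inv e.hom e.inv_hom_id hX

lemma ge_of_iso {X Y : C} (e : X ≅ Y) (hX : w.ge X) : w.ge Y :=
  w.ge_retract e.inv e.hom e.inv_hom_id hX

lemma eq_zero_of_leDeg_of_geDeg {a : ℤ} {X Y : C} (hX : w.leDeg a X) (hY : w.geDeg (a + 1) Y)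
    (φ : X ⟶ Y) : φ = 0 := by
  apply (shiftFunctor C (-a)).map_injective
  let e : (shiftFunctor C (-a)).obj Y ≅ ((shiftFunctor C (-(a + 1))).obj Y)⟦(1 : ℤ)⟧ :=
    (shiftFunctorAdd' C (-(a + 1)) 1 (-a) (by ring)).app Y
  rw [Functor.map_zero, ← cancel_mono e.hom, zero_comp]
  exact w.orth hX hY _

lemma exists_isWeightDecomp (k : ℤ) (M : C) :
    ∃ (A B : C) (f : A ⟶ M) (p : M ⟶ B) (δ : B ⟶ A⟦(1 : ℤ)⟧), w.IsWeightDecomp k f p δ := by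
  obtain ⟨X, Y, f, g, h, hT, hX, hY⟩ := w.decomp ((shiftFunctor C (-k)).obj M)
  have e : ((shiftFunctor C (-k)).obj M)⟦k⟧ ≅ M := (shiftFunctorCompIsoId C (-k) k (by ring)).app M
  exact ⟨_, _, _, _, _, distinguished_mk_comp_iso (Triangle.shift_distinguished _ hT k) e,
    w.le_of_iso ((shiftFunctorCompIsoId C k (-k) (by ring)).app X).symm hX,
    w.ge_of_iso ((shiftFunctorAdd' C k (-(k + 1)) (-1) (by ring)).app Y) hY⟩

variable {w}

lemma IsWeightDecomp.exists_lift {n : ℤ} {A M B : C} {f : A ⟶ M} {p : M ⟶ B}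
    {δ : B ⟶ A⟦(1 : ℤ)⟧} (hd : w.IsWeightDecomp n f p δ) {X : C} (hX : w.leDeg n X)
    (u : X ⟶ M) : ∃ α : X ⟶ A, u = α ≫ f :=
  Triangle.coyoneda_exact₂ _ hd.1 u (w.eq_zero_of_leDeg_of_geDeg hX hd.2.2 _)

lemma IsWeightDecomp.exists_desc {n : ℤ} {A N B : C} {f : A ⟶ N} {p : N ⟶ B}
    {δ : B ⟶ A⟦(1 : ℤ)⟧} (hd : w.IsWeightDecomp n f p δ) {Y : C} (hY : w.geDeg (n + 1) Y)
    (v : N ⟶ Y) : ∃ β : B ⟶ Y, v = p ≫ β :=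
  Triangle.yoneda_exact₂ _ hd.1 v (w.eq_zero_of_leDeg_of_geDeg hd.2.1 hY _)

/-- Killing weights does not depend on the chosen weight decompositions. -/
lemma KillsWeights.comp_comp_eq_zero {m n : ℤ} {M N : C} {g : M ⟶ N} (hg : w.KillsWeights m n g)
    {X Y : C} (hX : w.leDeg n X) (hY : w.geDeg m Y) (u : X ⟶ M) (v : N ⟶ Y) :
    u ≫ g ≫ v = 0 := by
  obtain ⟨A, B, A', B', f, p, δ, f', p', δ', hd, hd', hz⟩ := hg
  obtain ⟨α, rfl⟩ := hd.exists_lift hX u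
  obtain ⟨β, rfl⟩ := hd'.exists_desc (by rwa [sub_add_cancel]) v
  simp [reassoc_of% hz]

end WeightStructure

section WeightExact

variable {D : Type*} [Category D] [HasZeroObject D] [Preadditive D] [HasShift D ℤ]
  [∀ n : ℤ, (shiftFunctor D n).Additive] [Pretriangulated D]
  {w : WeightStructure C} {w' : WeightStructure D} (F : C ⥤ D) [F.CommShift ℤ]

lemma WeightStructure.leDeg_map (hle : ∀ X : C, w.le X → w'.le (F.obj X)) {i : ℤ} {X : C}
    (hX : w.leDeg i X) : w'.leDeg i (F.obj X) :=
  w'.le_of_iso ((F.commShiftIso (-i)).app X) (hle _ hX)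

lemma WeightStructure.geDeg_map (hge : ∀ X : C, w.ge X → w'.ge (F.obj X)) {i : ℤ} {X : C}
    (hX : w.geDeg i X) : w'.geDeg i (F.obj X) :=
  w'.ge_of_iso ((F.commShiftIso (-i)).app X) (hge _ hX)

end WeightExact

/-- Theorem 2.1.1(5): a weight-exact fully faithful exact functor detects the property of
killing weights `m,…,n`. -/
theorem killsWeights_of_map_of_weightExact_fullyFaithful
    {D : Type*} [Category D] [HasZeroObject D] [Preadditive D] [HasShift D ℤ]
    [∀ n : ℤ, (shiftFunctor D n).Additive] [Pretriangulated D]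
    (w : WeightStructure C) (w' : WeightStructure D)
    (F : C ⥤ D) [F.CommShift ℤ] [F.IsTriangulated] [F.Full] [F.Faithful]
    (hle : ∀ X : C, w.le X → w'.le (F.obj X))
    (hge : ∀ X : C, w.ge X → w'.ge (F.obj X))
    (m n : ℤ) (hmn : m ≤ n) {M N : C} (h : M ⟶ N)
    (hkill : w'.KillsWeights m n (F.map h)) :
    w.KillsWeights m n h := by
  obtain ⟨A, B, f, p, δ, hd⟩ := w.exists_isWeightDecomp n M
  obtain ⟨A', B', f', p', δ', hd'⟩ := w.exists_isWeightDecomp (m - 1) N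
  refine ⟨A, B, A', B', f, p, δ, f', p', δ', hd, hd', F.map_injective ?_⟩
  have hB' : w.geDeg m B' := by simpa using hd'.2.2
  simpa using hkill.comp_comp_eq_zero (WeightStructure.leDeg_map F hle hd.2.1)
    (WeightStructure.geDeg_map F hge hB') (F.map f) (F.map p')
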